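/- arXiv:2406.15987 — 4 statements merged into one kernel-verified Lean document; each statement's English description precedes it below -/
import Mathlib

section
/- Let M = [a,b]^n ⊂ ℝ^n with the Euclidean metric. The maximal Fréchet variance of any Borel probability measure on M is n(b−a)²/4, achieved by the measure placing equal mass 2^{−n} on each of the 2^n corner points of the cube. -/
open MeasureTheory

/-!
Every point of the cube is within distance `√n (b - a) / 2` of its centre `c`, so any probability
measure on the cube has `∫ ‖x - c‖² ≤ n (b - a)² / 4`. Under the uniform measure on the corners each
coordinate is `a` or `b` with probability `1/2`, whence `∫ ‖x - α‖² = n (b - a)² / 4 + ‖α - c‖²`,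
which is minimised at `α = c`.
-/

theorem Fintype.sum_comp_eval {ι β M : Type*} [Fintype ι] [DecidableEq ι] [Fintype β]
    [AddCommMonoid M] (i : ι) (h : β → M) :
    ∑ s : ι → β, h (s i) = Fintype.card β ^ (Fintype.card ι - 1) • ∑ v, h v := by
  rw [← (Equiv.piSplitAt i fun _ => β).symm.sum_comp]
  simp [Fintype.sum_prod_type, Equiv.piSplitAt_symm_apply, Finset.smul_sum,
    Fintype.card_subtype_compl]

theorem sq_sub_add_sq_sub_div_two (a b c : ℝ) :
    ((b - c) ^ 2 + (a - c) ^ 2) / 2 = (b - a) ^ 2 / 4 + (c - (a + b) / 2) ^ 2 := by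
  ring

theorem bddBelow_range_integral_norm_sub_sq {E : Type*} [SeminormedAddCommGroup E]
    [MeasurableSpace E] (μ : Measure E) (s : Set E) :
    BddBelow (Set.range fun α : s => ∫ x, ‖x - α‖ ^ 2 ∂μ) :=
  ⟨0, by rintro _ ⟨α, rfl⟩; exact integral_nonneg fun x => by positivity⟩

section Cube

variable {ι : Type*}

def cube (a b : ℝ) : Set (EuclideanSpace ℝ ι) := {x | ∀ i, x i ∈ Set.Icc a b}

noncomputable def cubeCenter (a b : ℝ) : EuclideanSpace ℝ ι := WithLp.toLp 2 fun _ => (a + b) / 2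

def cubeCorner (a b : ℝ) (s : ι → Bool) : EuclideanSpace ℝ ι :=
  WithLp.toLp 2 fun i => if s i then b else a

theorem cubeCenter_mem_cube {a b : ℝ} (hab : a ≤ b) : cubeCenter a b ∈ cube (ι := ι) a b :=
  fun _ => by constructor <;> simp only [cubeCenter] <;> linarith

variable [Fintype ι]

theorem norm_sub_cubeCenter_sq_le {a b : ℝ} {x : EuclideanSpace ℝ ι} (hx : x ∈ cube a b) :
    ‖x - cubeCenter a b‖ ^ 2 ≤ Fintype.card ι * (b - a) ^ 2 / 4 := by
  have hcoord : ∀ i, (x i - (a + b) / 2) ^ 2 ≤ (b - a) ^ 2 / 4 := fun i => by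
    nlinarith [(hx i).1, (hx i).2]
  calc ‖x - cubeCenter a b‖ ^ 2 = ∑ i, (x i - (a + b) / 2) ^ 2 := by
        simp [EuclideanSpace.real_norm_sq_eq, cubeCenter]
    _ ≤ ∑ _i : ι, (b - a) ^ 2 / 4 := Finset.sum_le_sum fun i _ => hcoord i
    _ = Fintype.card ι * (b - a) ^ 2 / 4 := by simp [mul_div_assoc]

theorem integral_norm_sub_cubeCenter_sq_le {a b : ℝ} {π : Measure (EuclideanSpace ℝ ι)}
    [IsProbabilityMeasure π] (hπ : π (cube a b)ᶜ = 0) :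
    ∫ x, ‖x - cubeCenter a b‖ ^ 2 ∂π ≤ Fintype.card ι * (b - a) ^ 2 / 4 := by
  have hbound : ∀ᵐ x ∂π, ‖‖x - cubeCenter a b‖ ^ 2‖ ≤ Fintype.card ι * (b - a) ^ 2 / 4 := by
    filter_upwards [measure_eq_zero_iff_ae_notMem.mp hπ] with x hx
    simpa using norm_sub_cubeCenter_sq_le (not_not.mp hx)
  simpa using (le_abs_self _).trans (norm_integral_le_of_norm_le_const hbound)

theorem iInf_integral_norm_sub_sq_le_of_measure_compl_cube_eq_zero {a b : ℝ} (hab : a ≤ b)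
    {π : Measure (EuclideanSpace ℝ ι)} [IsProbabilityMeasure π] (hπ : π (cube a b)ᶜ = 0) :
    ⨅ α : cube (ι := ι) a b, ∫ x, ‖x - (α : EuclideanSpace ℝ ι)‖ ^ 2 ∂π ≤
      Fintype.card ι * (b - a) ^ 2 / 4 :=
  ciInf_le_of_le (bddBelow_range_integral_norm_sub_sq π _) ⟨_, cubeCenter_mem_cube hab⟩
    (integral_norm_sub_cubeCenter_sq_le hπ)

variable [DecidableEq ι]

noncomputable def cubeCornerMeasure (a b : ℝ) : Measure (EuclideanSpace ℝ ι) :=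
  (2 ^ Fintype.card ι : ENNReal)⁻¹ • ∑ s, Measure.dirac (cubeCorner a b s)

theorem integral_cubeCornerMeasure (a b : ℝ) (f : EuclideanSpace ℝ ι → ℝ) :
    ∫ x, f x ∂cubeCornerMeasure a b = (2 ^ Fintype.card ι)⁻¹ * ∑ s, f (cubeCorner a b s) := by
  rw [cubeCornerMeasure, integral_smul_measure,
    integral_finsetSum_measure fun s _ => integrable_dirac (by simp)]
  simp [integral_dirac]

theorem average_cubeCorner_apply (a b : ℝ) (i : ι) (g : ℝ → ℝ) :
    (2 ^ Fintype.card ι)⁻¹ * ∑ s, g (cubeCorner a b s i) = (g b + g a) / 2 := by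
  have hcard : (2 : ℝ) ^ Fintype.card ι = 2 ^ (Fintype.card ι - 1) * 2 := by
    rw [← pow_succ, Nat.sub_add_cancel (Fintype.card_pos_iff.mpr ⟨i⟩)]
  simp only [cubeCorner, Fintype.sum_comp_eval i fun v : Bool => g (if v then b else a)]
  simp only [hcard, mul_inv_rev, Fintype.card_bool, Fintype.sum_bool, ↓reduceIte,
    Bool.false_eq_true, nsmul_eq_mul, Nat.cast_pow, Nat.cast_ofNat]
  field_simp

theorem integral_norm_sub_sq_cubeCornerMeasure (a b : ℝ) (α : EuclideanSpace ℝ ι) :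
    ∫ x, ‖x - α‖ ^ 2 ∂cubeCornerMeasure a b =
      Fintype.card ι * (b - a) ^ 2 / 4 + ‖α - cubeCenter a b‖ ^ 2 := by
  calc ∫ x, ‖x - α‖ ^ 2 ∂cubeCornerMeasure a b
      = ∑ i, (2 ^ Fintype.card ι)⁻¹ * ∑ s, (cubeCorner a b s i - α i) ^ 2 := by
        simp only [integral_cubeCornerMeasure, EuclideanSpace.real_norm_sq_eq, PiLp.sub_apply,
          Finset.mul_sum]
        exact Finset.sum_comm
    _ = ∑ i, ((b - α i) ^ 2 + (a - α i) ^ 2) / 2 :=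
        Fintype.sum_congr _ _ fun i => average_cubeCorner_apply a b i fun t => (t - α i) ^ 2
    _ = Fintype.card ι * (b - a) ^ 2 / 4 + ‖α - cubeCenter a b‖ ^ 2 := by
        simp [sq_sub_add_sq_sub_div_two, Finset.sum_add_distrib, EuclideanSpace.real_norm_sq_eq,
          cubeCenter, mul_div_assoc]

theorem iInf_integral_norm_sub_sq_cubeCornerMeasure {a b : ℝ} (hab : a ≤ b) :
    ⨅ α : cube (ι := ι) a b, ∫ x, ‖x - (α : EuclideanSpace ℝ ι)‖ ^ 2 ∂cubeCornerMeasure a b =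
      Fintype.card ι * (b - a) ^ 2 / 4 := by
  have hc : cubeCenter a b ∈ cube (ι := ι) a b := cubeCenter_mem_cube hab
  have : Nonempty (cube (ι := ι) a b) := ⟨⟨_, hc⟩⟩
  refine le_antisymm (ciInf_le_of_le (bddBelow_range_integral_norm_sub_sq _ _) ⟨_, hc⟩ ?_)
    (le_ciInf fun α => ?_) <;>
    simp [integral_norm_sub_sq_cubeCornerMeasure]

end Cube

/-- On the cube [a,b]^n with the Euclidean metric, the maximal Fréchet variance of a
Borel probability measure is n(b-a)²/4, achieved by equal mass 2^{-n} on the 2^n corners. -/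
theorem frechetVariance_cube_max (n : ℕ) (a b : ℝ) (hab : a < b) :
    (∀ π : Measure (EuclideanSpace ℝ (Fin n)), IsProbabilityMeasure π →
      π {x : EuclideanSpace ℝ (Fin n) | ∀ i, x i ∈ Set.Icc a b}ᶜ = 0 →
      (⨅ α : {x : EuclideanSpace ℝ (Fin n) | ∀ i, x i ∈ Set.Icc a b},
          ∫ x, ‖x - (α : EuclideanSpace ℝ (Fin n))‖ ^ 2 ∂π)
        ≤ n * (b - a) ^ 2 / 4) ∧
    (⨅ α : {x : EuclideanSpace ℝ (Fin n) | ∀ i, x i ∈ Set.Icc a b},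
        ∫ x, ‖x - (α : EuclideanSpace ℝ (Fin n))‖ ^ 2
          ∂((2 ^ n : ENNReal)⁻¹ • ∑ s : Fin n → Bool,
              Measure.dirac ((WithLp.equiv 2 (Fin n → ℝ)).symm
                (fun i => if s i then b else a))))
      = n * (b - a) ^ 2 / 4 := by
  have hcorners : (2 ^ n : ENNReal)⁻¹ • ∑ s : Fin n → Bool,
      Measure.dirac ((WithLp.equiv 2 (Fin n → ℝ)).symm (fun i => if s i then b else a)) =
      cubeCornerMeasure a b := by
    simp [cubeCornerMeasure, cubeCorner]
  refine ⟨fun π _ hπ => ?_, ?_⟩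
  · have h := iInf_integral_norm_sub_sq_le_of_measure_compl_cube_eq_zero hab.le hπ
    rwa [Fintype.card_fin] at h
  · have h := iInf_integral_norm_sub_sq_cubeCornerMeasure (ι := Fin n) hab.le
    rwa [Fintype.card_fin, ← hcorners] at h
end

section
/- Let S¹_p = {0,…,p−1} with metric d_p(x,y) = min(|x−y|/p, 1−|x−y|/p), and let π* be the uniform distribution on S¹_p. Then for every probability distribution π on S¹_p, Var(π) ≤ Var(π*), where Var(π) = min_{α∈S¹_p} Σ_{x} d_p(x,α)² π(x). -/
/-!
The squared circle distance `d_p(x, α)²` depends only on `x - α` in `ℤ/p`, so the cost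
`c(α) = ∑ₓ d_p(x, α)² π(x)` is a convolution. The costs summed over all `α` total
`∑ₖ d_p(k, 0)²` whatever `π` is, so some `α` has cost at most the average `(∑ₖ d_p(k, 0)²) / p`,
which is exactly the (constant) cost of the uniform distribution.
-/

open Finset

section TranslationInvariantCost

variable {G : Type*} [AddCommGroup G] [Fintype G]

theorem sum_sum_sub_mul_eq (f π : G → ℝ) (hπ : ∑ x, π x = 1) :
    ∑ α, ∑ x, f (x - α) * π x = ∑ k, f k := by
  calc ∑ α, ∑ x, f (x - α) * π x
      = ∑ x, (∑ α, f (x - α)) * π x := by rw [sum_comm]; simp only [sum_mul]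
    _ = ∑ x, (∑ k, f k) * π x := by
        congr! 2 with x; exact (Equiv.subLeft x).sum_comp f
    _ = ∑ k, f k := by rw [← mul_sum, hπ, mul_one]

theorem sum_sub_mul_const (f : G → ℝ) (α : G) (c : ℝ) :
    ∑ x, f (x - α) * c = (∑ k, f k) * c := by
  rw [← sum_mul, ← (Equiv.subRight α).sum_comp f]
  rfl

theorem iInf_sum_sub_mul_le_iInf_uniform [Nonempty G] (f π : G → ℝ) (hπ : ∑ x, π x = 1) :
    ⨅ α, ∑ x, f (x - α) * π x ≤ ⨅ α, ∑ x, f (x - α) * (1 / Fintype.card G) := by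
  have hcard : (0 : ℝ) < Fintype.card G := by exact_mod_cast Fintype.card_pos
  obtain ⟨β, -, hβ⟩ := exists_le_of_sum_le (univ_nonempty (α := G))
    (f := fun α ↦ ∑ x, f (x - α) * π x) (g := fun _ ↦ (∑ k, f k) * (1 / Fintype.card G)) <| by
      rw [sum_sum_sub_mul_eq f π hπ, sum_const, card_univ, nsmul_eq_mul]
      field_simp
      rfl
  refine le_ciInf fun α ↦ Finite.ciInf_le_of_le β ?_
  rwa [sum_sub_mul_const]

end TranslationInvariantCost

theorem Fin.abs_sub_eq_or {p : ℕ} [NeZero p] (x α : Fin p) :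
    |(x : ℝ) - α| = ((x - α : Fin p) : ℝ) ∨ |(x : ℝ) - α| = p - ((x - α : Fin p) : ℝ) := by
  rcases le_or_gt α x with h | h
  · left
    rw [Fin.coe_sub_iff_le.mpr h, Nat.cast_sub h, abs_of_nonneg (by simpa using h)]
  · right
    rw [Fin.coe_sub_iff_lt.mpr h, Nat.cast_sub (by omega), Nat.cast_add,
      abs_of_neg (by simpa using h)]
    ring

theorem Fin.min_abs_sub_div_eq {p : ℕ} [NeZero p] (x α : Fin p) :
    min (|(x : ℝ) - α| / p) (1 - |(x : ℝ) - α| / p)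
      = min (((x - α : Fin p) : ℝ) / p) (1 - ((x - α : Fin p) : ℝ) / p) := by
  have hp : (p : ℝ) ≠ 0 := NeZero.ne _
  rcases Fin.abs_sub_eq_or x α with h | h
  · rw [h]
  · rw [h, min_comm, sub_div, div_self hp]
    ring_nf

theorem frechetVariance_discrete_circle_le_uniform_general (p : ℕ) (hp : 0 < p)
    (π : Fin p → ℝ) (hπ1 : ∑ i, π i = 1) :
    (⨅ α : Fin p, ∑ x : Fin p,
        (min (|(x.val : ℝ) - α.val| / p) (1 - |(x.val : ℝ) - α.val| / p)) ^ 2 * π x)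
      ≤ ⨅ α : Fin p, ∑ x : Fin p,
        (min (|(x.val : ℝ) - α.val| / p) (1 - |(x.val : ℝ) - α.val| / p)) ^ 2 * (1 / p) := by
  have : NeZero p := ⟨hp.ne'⟩
  simp_rw [Fin.min_abs_sub_div_eq]
  simpa using iInf_sum_sub_mul_le_iInf_uniform
    (fun k : Fin p ↦ (min ((k : ℝ) / p) (1 - (k : ℝ) / p)) ^ 2) π hπ1

/-- On the discrete circle with p states, the uniform distribution maximizes the
Fréchet variance. -/
theorem frechetVariance_discrete_circle_le_uniform (p : ℕ) (hp : 0 < p)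
    (π : Fin p → ℝ) (hπ0 : ∀ i, 0 ≤ π i) (hπ1 : ∑ i, π i = 1) :
    (⨅ α : Fin p, ∑ x : Fin p,
        (min (|(x.val : ℝ) - α.val| / p) (1 - |(x.val : ℝ) - α.val| / p)) ^ 2 * π x)
      ≤ ⨅ α : Fin p, ∑ x : Fin p,
        (min (|(x.val : ℝ) - α.val| / p) (1 - |(x.val : ℝ) - α.val| / p)) ^ 2 * (1 / p) :=
  frechetVariance_discrete_circle_le_uniform_general p hp π hπ1
end

section
/- Let (M,d) be a compact metric space with at least two points, X ⊂ M compact, and g : M → X measurable with d(x, g(x)) ≤ ε for all x ∈ M. Let π be a Borel probability measure on M and π_X = g_*π its pushforward. Then |F_{(M,d)}(π) − F_{(X,d)}(π_X)| ≤ 3ε/ν_{(M,d)}, where ν_{(M,d)} is the synchrony normalization constant of (M,d). -/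
/-!
Both synchronies are built from root-mean-square distances to a centre, and moving every point
by at most `ε` changes a root-mean-square distance by at most `ε` (Minkowski's inequality in
`L²`). A centre `α ∈ X` is also a centre in `M`, while a centre `α ∈ M` can be replaced by
`g α ∈ X` at the price of a second `ε`; hence `V_M(π) ≤ V_X(π_X) + ε` and
`V_X(π_X) ≤ V_M(π) + 2ε`. Pushing measures forward along `g` and along the inclusion `X ⊆ M`
gives `|ν_M - ν_X| ≤ ε` in the same way. A two-point measure shows `ν_M > 0`, and the bound
`3ε / ν_M` is then elementary algebra.
-/

open MeasureTheory

lemma abs_div_sub_div_le_three_mul_div {a b s t ε : ℝ} (hs : 0 < s) (ha : 0 ≤ a) (hb : 0 ≤ b)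
    (hbt : b ≤ t) (hab : a ≤ b + ε) (hba : b ≤ a + 2 * ε) (hst : s ≤ t + ε)
    (hts : t ≤ s + ε) : |b / t - a / s| ≤ 3 * ε / s := by
  obtain rfl | ht := (hb.trans hbt).eq_or_lt
  · rw [div_zero, zero_sub, abs_neg, abs_of_nonneg (by positivity)]
    gcongr
    linarith
  · have hbs := mul_le_mul_of_nonneg_left hst hb
    have hbt' := mul_le_mul_of_nonneg_left hts hb
    rw [abs_sub_le_iff]
    constructor
    · rw [sub_le_iff_le_add, ← add_div, div_le_div_iff₀ ht hs]
      nlinarith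
    · rw [sub_le_comm, ← sub_div, div_le_div_iff₀ hs ht]
      nlinarith

section RootMeanSquare

variable {Ω : Type*} [MeasurableSpace Ω] {μ : Measure Ω}

lemma lpNorm_two_eq_sqrt_integral_sq {f : Ω → ℝ} (hf : AEStronglyMeasurable f μ) :
    lpNorm f 2 μ = √(∫ x, f x ^ 2 ∂μ) := by
  rw [lpNorm_eq_integral_norm_rpow_toReal two_ne_zero ENNReal.ofNat_ne_top hf, Real.sqrt_eq_rpow]
  simp

lemma sqrt_integral_sq_le_add [IsProbabilityMeasure μ] {f h : Ω → ℝ} {c : ℝ}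
    (hf : AEStronglyMeasurable f μ) (hh : MemLp h 2 μ) (hc : 0 ≤ c)
    (hf₀ : ∀ x, 0 ≤ f x) (hfh : ∀ x, f x ≤ h x + c) :
    √(∫ x, f x ^ 2 ∂μ) ≤ √(∫ x, h x ^ 2 ∂μ) + c := by
  rw [← lpNorm_two_eq_sqrt_integral_sq hf, ← lpNorm_two_eq_sqrt_integral_sq hh.1]
  calc lpNorm f 2 μ ≤ lpNorm (h + fun _ ↦ c) 2 μ :=
        lpNorm_mono_real (hh.add (memLp_const c)) fun x ↦ by
          simpa [abs_of_nonneg (hf₀ x)] using hfh x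
    _ ≤ lpNorm h 2 μ + lpNorm (fun _ ↦ c) 2 μ := lpNorm_add_le hh one_le_two
    _ = lpNorm h 2 μ + c := by simp [abs_of_nonneg hc]

end RootMeanSquare

section Synchrony

variable {A B : Type*} [PseudoMetricSpace A] [MeasurableSpace A] [PseudoMetricSpace B]
  [MeasurableSpace B]

/-- `V(μ)`: the Wasserstein distance `W₂(μ, δ_α)` is `√(∫ d(x, α)² dμ)`. -/
noncomputable def syncV (μ : Measure A) : ℝ :=
  ⨅ α : A, √(∫ x, dist x α ^ 2 ∂μ)

variable (A) in
noncomputable def syncNu : ℝ :=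
  ⨆ μ : ProbabilityMeasure A, syncV (μ : Measure A)

lemma syncV_nonneg (μ : Measure A) : 0 ≤ syncV μ :=
  Real.iInf_nonneg fun _ ↦ Real.sqrt_nonneg _

lemma syncV_le (μ : Measure A) (α : A) : syncV μ ≤ √(∫ x, dist x α ^ 2 ∂μ) :=
  ciInf_le ⟨0, by rintro _ ⟨β, rfl⟩; positivity⟩ α

lemma syncV_map_le_syncV_map_add [OpensMeasurableSpace A] [OpensMeasurableSpace B]
    [BoundedSpace B] {Ω : Type*} [MeasurableSpace Ω] (μ : Measure Ω) [IsProbabilityMeasure μ]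
    {φ : Ω → A} {ψ : Ω → B} (hφ : Measurable φ) (hψ : Measurable ψ) {c : ℝ}
    (hc : 0 ≤ c) (h : ∀ β, ∃ α, ∀ ω, dist (φ ω) α ≤ dist (ψ ω) β + c) :
    syncV (μ.map φ) ≤ syncV (μ.map ψ) + c := by
  have : Nonempty B := (nonempty_of_isProbabilityMeasure μ).map ψ
  obtain ⟨C, hC⟩ := Metric.boundedSpace_iff.mp ‹BoundedSpace B›
  rw [← sub_le_iff_le_add]
  refine le_ciInf fun β ↦ ?_
  obtain ⟨α, hα⟩ := h β
  have hφα : Measurable fun ω ↦ dist (φ ω) α := by fun_prop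
  have hψβ : Measurable fun ω ↦ dist (ψ ω) β := by fun_prop
  have hψβ₂ : MemLp (fun ω ↦ dist (ψ ω) β) 2 μ :=
    .of_bound hψβ.aestronglyMeasurable C (.of_forall fun ω ↦ by simpa using hC (ψ ω) β)
  calc syncV (μ.map φ) - c ≤ √(∫ a, dist a α ^ 2 ∂μ.map φ) - c := by
        grw [syncV_le _ α]
    _ = √(∫ ω, dist (φ ω) α ^ 2 ∂μ) - c := by
      rw [integral_map hφ.aemeasurable (by fun_prop)]
    _ ≤ √(∫ ω, dist (ψ ω) β ^ 2 ∂μ) := sub_le_iff_le_add.mpr <|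
      sqrt_integral_sq_le_add hφα.aestronglyMeasurable hψβ₂ hc (fun _ ↦ dist_nonneg) hα
    _ = √(∫ b, dist b β ^ 2 ∂μ.map ψ) := by
      rw [integral_map hψ.aemeasurable (by fun_prop)]

lemma syncV_le_of_dist_le [OpensMeasurableSpace A] (μ : Measure A) [IsProbabilityMeasure μ]
    {C : ℝ} (hC : ∀ x y : A, dist x y ≤ C) : syncV μ ≤ C := by
  obtain ⟨α⟩ := nonempty_of_isProbabilityMeasure μ
  refine (syncV_le μ α).trans ?_
  simpa using sqrt_integral_sq_le_add (h := 0) (by fun_prop) MemLp.zero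
    (dist_nonneg.trans (hC α α)) (fun x ↦ dist_nonneg) fun x ↦ by simpa using hC x α

lemma syncV_le_syncNu [BoundedSpace A] [OpensMeasurableSpace A] (μ : ProbabilityMeasure A) :
    syncV (μ : Measure A) ≤ syncNu A := by
  obtain ⟨C, hC⟩ := Metric.boundedSpace_iff.mp ‹BoundedSpace A›
  exact le_ciSup ⟨C, by rintro _ ⟨ν, rfl⟩; exact syncV_le_of_dist_le ν.toMeasure hC⟩ μ

lemma syncNu_le_syncNu_add [Nonempty A] [BoundedSpace B] [OpensMeasurableSpace B] {c : ℝ}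
    (h : ∀ μ : ProbabilityMeasure A, ∃ ν : ProbabilityMeasure B,
      syncV (μ : Measure A) ≤ syncV (ν : Measure B) + c) :
    syncNu A ≤ syncNu B + c := by
  have : Nonempty (ProbabilityMeasure A) :=
    ⟨⟨.dirac (Classical.arbitrary A), inferInstance⟩⟩
  refine ciSup_le fun μ ↦ ?_
  obtain ⟨ν, hν⟩ := h μ
  grw [hν, syncV_le_syncNu ν]

end Synchrony

lemma syncNu_pos {A : Type*} [MetricSpace A] [MeasurableSpace A] [OpensMeasurableSpace A]
    [BoundedSpace A] (h : ∃ x y : A, x ≠ y) : 0 < syncNu A := by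
  obtain ⟨x, y, hxy⟩ := h
  have : Nonempty A := ⟨x⟩
  let μ : Measure A := (2⁻¹ : ENNReal) • (.dirac x + .dirac y)
  have : IsProbabilityMeasure μ :=
    ⟨by simp [μ, ← two_mul, ENNReal.mul_inv_cancel two_ne_zero ENNReal.ofNat_ne_top]⟩
  have hμ : ∀ α, dist x y / 2 ≤ √(∫ z, dist z α ^ 2 ∂μ) := fun α ↦ by
    have hint : ∫ z, dist z α ^ 2 ∂μ = (dist x α ^ 2 + dist y α ^ 2) / 2 := by
      rw [integral_smul_measure, integral_add_measure (integrable_dirac enorm_lt_top)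
        (integrable_dirac enorm_lt_top), integral_dirac, integral_dirac]
      simp [div_eq_inv_mul]
    rw [hint]
    apply Real.le_sqrt_of_sq_le
    -- `(a² + b²) / 2 ≥ ((a + b) / 2)²` and `a + b ≥ d(x, y)`
    nlinarith [dist_triangle_right x y α, sq_nonneg (dist x α - dist y α), 
      dist_nonneg (x := x) (y := y)]
  calc 0 < dist x y / 2 := by have := dist_pos.mpr hxy; positivity
    _ ≤ syncV μ := le_ciInf hμ
    _ ≤ syncNu A := syncV_le_syncNu ⟨μ, this⟩

theorem synchrony_approximation_general {M : Type*} [MetricSpace M] [CompactSpace M]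
    [MeasurableSpace M] [BorelSpace M] (hM : ∃ x y : M, x ≠ y)
    (X : Set M) (g : M → X) (hg : Measurable g)
    (ε : ℝ) (hε : 0 ≤ ε) (hgd : ∀ x : M, dist x (g x : M) ≤ ε)
    (π : Measure M) [IsProbabilityMeasure π] :
    |(1 - (⨅ α : M, Real.sqrt (∫ x, dist x α ^ 2 ∂π)) /
          (⨆ μ : ProbabilityMeasure M,
            ⨅ α : M, Real.sqrt (∫ x, dist x α ^ 2 ∂(μ : Measure M))))
      - (1 - (⨅ α : X, Real.sqrt (∫ y, dist y α ^ 2 ∂(Measure.map g π))) /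
          (⨆ μ : ProbabilityMeasure X,
            ⨅ α : X, Real.sqrt (∫ y, dist y α ^ 2 ∂(μ : Measure X))))|
      ≤ 3 * ε / (⨆ μ : ProbabilityMeasure M,
          ⨅ α : M, Real.sqrt (∫ x, dist x α ^ 2 ∂(μ : Measure M))) := by
  have : Nonempty M := hM.nonempty
  have : Nonempty X := this.map g
  have hV_le_map (μ : Measure M) [IsProbabilityMeasure μ] :
      syncV μ ≤ syncV (μ.map g) + ε := by
    simpa using syncV_map_le_syncV_map_add μ measurable_id hg hε fun β ↦
      ⟨β, fun x ↦ by
        simp only [id, Subtype.dist_eq]; linarith [dist_triangle x (g x) β, hgd x]⟩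
  have hV_map_le : syncV (π.map g) ≤ syncV π + 2 * ε := by
    simpa using syncV_map_le_syncV_map_add π hg measurable_id (by positivity) fun β ↦
      ⟨g β, fun x ↦ by
        simp only [id, Subtype.dist_eq]
        linarith [dist_triangle4 (g x : M) x β (g β), dist_comm (g x : M) x, hgd x, hgd β]⟩
  have hν_le : syncNu M ≤ syncNu X + ε := syncNu_le_syncNu_add fun μ ↦
    ⟨μ.map hg.aemeasurable, hV_le_map μ⟩
  have hν_ge : syncNu X ≤ syncNu M + ε := syncNu_le_syncNu_add fun μ ↦
    ⟨μ.map measurable_subtype_coe.aemeasurable, by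
      simpa using syncV_map_le_syncV_map_add (μ : Measure X) measurable_id
        measurable_subtype_coe hε fun β ↦ ⟨g β, fun x ↦ by
        simp only [id, Subtype.dist_eq]; linarith [dist_triangle (x : M) β (g β), hgd β]⟩⟩
  have : IsProbabilityMeasure (π.map g) := Measure.isProbabilityMeasure_map hg.aemeasurable
  rw [sub_sub_sub_cancel_left]
  exact abs_div_sub_div_le_three_mul_div (syncNu_pos hM) (syncV_nonneg _) (syncV_nonneg _)
    (syncV_le_syncNu ⟨π.map g, this⟩) (hV_le_map π) hV_map_le hν_le hν_ge

/-- Approximation of synchrony: if every point of M is within ε of its observed state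
g(x) ∈ X, then the synchrony of π on M and of the pushforward g_*π on X differ by at
most 3ε/ν_{(M,d)}. -/
theorem synchrony_approximation {M : Type*} [MetricSpace M] [CompactSpace M]
    [MeasurableSpace M] [BorelSpace M] (hM : ∃ x y : M, x ≠ y)
    (X : Set M) (hX : IsCompact X) (g : M → X) (hg : Measurable g)
    (ε : ℝ) (hε : 0 ≤ ε) (hgd : ∀ x : M, dist x (g x : M) ≤ ε)
    (π : Measure M) [IsProbabilityMeasure π] :
    |(1 - (⨅ α : M, Real.sqrt (∫ x, dist x α ^ 2 ∂π)) /
          (⨆ μ : ProbabilityMeasure M,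
            ⨅ α : M, Real.sqrt (∫ x, dist x α ^ 2 ∂(μ : Measure M))))
      - (1 - (⨅ α : X, Real.sqrt (∫ y, dist y α ^ 2 ∂(Measure.map g π))) /
          (⨆ μ : ProbabilityMeasure X,
            ⨅ α : X, Real.sqrt (∫ y, dist y α ^ 2 ∂(μ : Measure X))))|
      ≤ 3 * ε / (⨆ μ : ProbabilityMeasure M,
          ⨅ α : M, Real.sqrt (∫ x, dist x α ^ 2 ∂(μ : Measure M))) :=
  synchrony_approximation_general hM X g hg ε hε hgd π
end

section
/- Consider the three-state circular space with arcs [0,1/2), [1/2,3/4), [3/4,1) and distances between states given by the arclength between arc midpoints: d(0,1) = d(0,2) = 3/8, d(1,2) = 1/4. The distribution π* = [7/16, 9/32, 9/32] has Fréchet variance Var(π*) = min_{i∈{0,1,2}} Σ_j d(i,j)² π*[j] = 81/1024, while the uniform distribution π = [1/3,1/3,1/3] has Var(π) = (1/3)((3/8)² + (1/4)²) = 13/192 < 81/1024. Hence the uniform distribution does not maximize Fréchet variance in this space. -/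
lemma iInf_fin_three (f : Fin 3 → ℝ) :
    (⨅ i : Fin 3, f i) = min (f 0) (min (f 1) (f 2)) := by
  apply le_antisymm
  · apply le_min (ciInf_le (Set.Finite.bddBelow (Set.finite_range f)) 0)
    exact le_min (ciInf_le (Set.Finite.bddBelow (Set.finite_range f)) 1)
      (ciInf_le (Set.Finite.bddBelow (Set.finite_range f)) 2)
  · apply le_ciInf
    intro i
    fin_cases i
    · exact min_le_left _ _
    · exact le_trans (min_le_right _ _) (min_le_left _ _)
    · exact le_trans (min_le_right _ _) (min_le_right _ _)

/-- In the three-state circular space with arc midpoints 1/4, 5/8, 7/8, the distribution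
[7/16, 9/32, 9/32] has Fréchet variance 81/1024 while the uniform distribution has
Fréchet variance 13/192 < 81/1024; so the uniform distribution is not maximal. -/
theorem uniform_not_maximal_three_state_circle :
    (⨅ i : Fin 3, ∑ j : Fin 3,
        (min |(![1/4, 5/8, 7/8] : Fin 3 → ℝ) i - (![1/4, 5/8, 7/8] : Fin 3 → ℝ) j|
          (1 - |(![1/4, 5/8, 7/8] : Fin 3 → ℝ) i - (![1/4, 5/8, 7/8] : Fin 3 → ℝ) j|)) ^ 2
          * (![7/16, 9/32, 9/32] : Fin 3 → ℝ) j) = 81 / 1024 ∧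
    (⨅ i : Fin 3, ∑ j : Fin 3,
        (min |(![1/4, 5/8, 7/8] : Fin 3 → ℝ) i - (![1/4, 5/8, 7/8] : Fin 3 → ℝ) j|
          (1 - |(![1/4, 5/8, 7/8] : Fin 3 → ℝ) i - (![1/4, 5/8, 7/8] : Fin 3 → ℝ) j|)) ^ 2
          * (1 / 3 : ℝ)) = 13 / 192 ∧
    (13 / 192 : ℝ) < 81 / 1024 := by
  refine ⟨?_, ?_, by norm_num⟩ <;>
  · rw [iInf_fin_three]
    simp only [Fin.sum_univ_three, Matrix.cons_val_zero, Matrix.cons_val_one, Matrix.head_cons,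
      Matrix.cons_val_two, Matrix.tail_cons]
    rw [show |(1/4 : ℝ) - 1/4| = 0 by norm_num,
        show |(1/4 : ℝ) - 5/8| = 3/8 by rw [abs_of_nonpos] <;> norm_num,
        show |(1/4 : ℝ) - 7/8| = 5/8 by rw [abs_of_nonpos] <;> norm_num,
        show |(5/8 : ℝ) - 1/4| = 3/8 by rw [abs_of_nonneg] <;> norm_num,
        show |(5/8 : ℝ) - 5/8| = 0 by norm_num,
        show |(5/8 : ℝ) - 7/8| = 1/4 by rw [abs_of_nonpos] <;> norm_num,
        show |(7/8 : ℝ) - 1/4| = 5/8 by rw [abs_of_nonneg] <;> norm_num,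
        show |(7/8 : ℝ) - 5/8| = 1/4 by rw [abs_of_nonneg] <;> norm_num,
        show |(7/8 : ℝ) - 7/8| = 0 by norm_num]
    norm_num [min_def]
end
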